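/- arXiv:1410.3119 — 4 statements merged into one kernel-verified Lean document; each statement's English description precedes it below -/
import Mathlib

section
/- Hypergraph (inclusion–exclusion) representation: let α be a real number with α ≠ −1, let S ⊆ ℤ^d, let n ≥ 0 and let (ω_0, …, ω_n) be any finite sequence of points of ℤ^d. For a nonempty subset J ⊆ {0,…,n} define F_J = α·∏_{j∈J} 1[ω_j ∈ S] if |J| is odd, and F_J = −(α/(1+α))·∏_{j∈J} 1[ω_j ∈ S] if |J| is even. Then (1+α)^{1[S ∩ {ω_0,…,ω_n} ≠ ∅]} = ∏_{J ⊆ {0,…,n}, |J| ≥ 1} (1 + F_J). -/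
/-! A factor `1 + F_J` is `1` unless every `ω_j`, `j ∈ J`, lies in `S`, and then it equals
`(1+α)^{(-1)^{|J|+1}}`. So the product is `1+α` raised to `∑ (-1)^{|J|+1}` over the nonempty
subsets `J` of `T = {j ≤ n | ω_j ∈ S}`, which is `1 - ∑_{J ⊆ T} (-1)^{|J|} = 1[T ≠ ∅]`. -/

open scoped BigOperators Classical

noncomputable section

abbrev Pt (d : ℕ) := Fin d → ℤ

/-- The hyperedge weight `F_J`: for a nonempty `J ⊆ {0,…,n}`,
`F_J = α·∏_{j∈J} 1[ω_j ∈ S]` if `|J|` is odd and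
`F_J = −(α/(1+α))·∏_{j∈J} 1[ω_j ∈ S]` if `|J|` is even. -/
def Fweight {d : ℕ} (α : ℝ) (S : Set (Pt d)) (ω : ℕ → Pt d) (J : Finset ℕ) : ℝ :=
  if Odd J.card then α * ∏ j ∈ J, (if ω j ∈ S then (1 : ℝ) else 0)
  else -(α / (1 + α)) * ∏ j ∈ J, (if ω j ∈ S then (1 : ℝ) else 0)

namespace Finset

lemma prod_zpow_eq_zpow_sum {ι G : Type*} [CommGroupWithZero G] {a : G} (ha : a ≠ 0)
    (s : Finset ι) (f : ι → ℤ) : ∏ i ∈ s, a ^ f i = a ^ ∑ i ∈ s, f i := by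
  induction s using Finset.cons_induction with
  | empty => simp
  | cons i s _ ih => rw [prod_cons, sum_cons, ih, zpow_add₀ ha]

lemma sum_powerset_erase_empty_neg_one_pow_card_add_one {α : Type*} [DecidableEq α]
    (T : Finset α) :
    ∑ J ∈ T.powerset.erase ∅, (-1 : ℤ) ^ (#J + 1) = if T = ∅ then 0 else 1 := by
  have hsum := sum_powerset_neg_one_pow_card (x := T)
  rw [← insert_erase (empty_mem_powerset T), sum_insert (notMem_erase _ _)] at hsum
  simp only [pow_succ, mul_neg_one, sum_neg_distrib, card_empty, pow_zero] at hsum ⊢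
  split_ifs at hsum ⊢ <;> omega

lemma prod_powerset_erase_empty_ite_forall {ι M : Type*} [DecidableEq ι] [CommMonoid M]
    (U : Finset ι) (p : ι → Prop) [DecidablePred p] (f : Finset ι → M) :
    ∏ J ∈ U.powerset.erase ∅, (if ∀ j ∈ J, p j then f J else 1)
      = ∏ J ∈ (U.filter p).powerset.erase ∅, f J := by
  rw [← prod_filter]
  congr 1
  ext J
  simp only [mem_filter, mem_erase, mem_powerset, subset_iff]
  grind

end Finset

open Finset

lemma one_add_Fweight {d : ℕ} {α : ℝ} (hα : α ≠ -1) (S : Set (Pt d)) (ω : ℕ → Pt d)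
    (J : Finset ℕ) :
    1 + Fweight α S ω J
      = if ∀ j ∈ J, ω j ∈ S then (1 + α) ^ ((-1 : ℤ) ^ (#J + 1)) else 1 := by
  have hβ : 1 + α ≠ 0 := fun h => hα (by linarith)
  rw [Fweight, prod_boole]
  split_ifs with hodd <;> simp only [mul_one, mul_zero, add_zero]
  · rw [(Odd.add_one hodd).neg_one_pow, zpow_one]
  · rw [(Nat.not_odd_iff_even.mp hodd).add_one.neg_one_pow, zpow_neg_one]
    field_simp
    ring

/-- **Hypergraph (inclusion–exclusion) representation.**
For `α ≠ −1`, `S ⊆ ℤ^d` and a finite sequence `ω_0, …, ω_n` of points of `ℤ^d`,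
`(1+α)^{1[S ∩ {ω_0,…,ω_n} ≠ ∅]} = ∏_{J ⊆ {0,…,n}, |J| ≥ 1} (1 + F_J)`. -/
theorem hypergraph_representation {d : ℕ} (n : ℕ) (α : ℝ) (hα : α ≠ -1)
    (S : Set (Pt d)) (ω : ℕ → Pt d) :
    (if ∃ j ≤ n, ω j ∈ S then 1 + α else 1)
      = ∏ J ∈ (Finset.range (n + 1)).powerset.erase ∅, (1 + Fweight α S ω J) := by
  have hβ : 1 + α ≠ 0 := fun h => hα (by linarith)
  simp_rw [one_add_Fweight hα, prod_powerset_erase_empty_ite_forall,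
    prod_zpow_eq_zpow_sum hβ, sum_powerset_erase_empty_neg_one_pow_card_add_one]
  by_cases h : ∃ j ≤ n, ω j ∈ S <;> simp [h]
end
end

section
/- Lace prescription for labelled graphs: let a < b be integers and let w be any real-valued function on labelled edges. Then Σ_{Γ a connected labelled graph on {a,…,b}} ∏_{e ∈ Γ} w(e) = Σ_{L a labelled lace on {a,…,b}} (∏_{e ∈ L} w(e)) · ∏_{e' compatible with L} (1 + w(e')). -/
open scoped BigOperators Classical

/-- A labelled edge on a discrete interval: a pair `(s,t)` of natural numbers together
with a label (`true` = spacelike, `false` = timelike). -/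
abbrev LEdge : Type := (ℕ × ℕ) × Bool

/-- All labelled edges on the discrete interval `{a,…,b}` (with `s < t`). -/
def allLEdges (a b : ℕ) : Finset LEdge :=
  (((Finset.Icc a b) ×ˢ (Finset.Icc a b)) ×ˢ (Finset.univ : Finset Bool)).filter
    (fun e => e.1.1 < e.1.2)

/-- Lace connectedness of a labelled graph on `{a,…,b}`: (i) `b > a+1`; (ii) every
`a < j < b` is strictly covered by some edge; (iii) there are edges with left endpoint
`a` and right endpoint `b`. -/
def LConnected (a b : ℕ) (Γ : Finset LEdge) : Prop :=
  a + 1 < b ∧ (∀ j, a < j → j < b → ∃ e ∈ Γ, e.1.1 < j ∧ j < e.1.2) ∧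
    (∃ e ∈ Γ, e.1.1 = a) ∧ (∃ e ∈ Γ, e.1.2 = b)

/-- The labelled edge selected for the pair `(s,t)`: if the pair occurs in `Γ` with the
label spacelike then the spacelike edge is chosen, otherwise the timelike one. -/
def pickEdge (Γ : Finset LEdge) (s t : ℕ) : LEdge :=
  if ((s, t), true) ∈ Γ then ((s, t), true) else ((s, t), false)

/-- `t_{i+1} = max { t : ∃ s < t_i, (s,t) ∈ Γ }`. -/
def nextT (Γ : Finset LEdge) (t : ℕ) : ℕ :=
  (Γ.filter (fun e => e.1.1 < t)).sup (fun e => e.1.2)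

/-- `s_{i+1} = min { s : (s, t_{i+1}) ∈ Γ }`. -/
def minS (Γ : Finset LEdge) (t : ℕ) : ℕ :=
  (((Γ.filter (fun e => e.1.2 = t)).image (fun e => e.1.1)).min).untopD 0

/-- The inductive part of the lace selection algorithm, run with fuel. -/
def laceAux (Γ : Finset LEdge) (b : ℕ) : ℕ → ℕ → Finset LEdge
  | 0, _ => ∅
  | fuel + 1, t =>
    if b ≤ t then ∅
    else insert (pickEdge Γ (minS Γ (nextT Γ t)) (nextT Γ t)) (laceAux Γ b fuel (nextT Γ t))

/-- The lace `L_Γ` associated to a (connected) labelled graph `Γ` on `{a,…,b}`: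
`s₁ = a`, `t₁ = max{t : (a,t) ∈ Γ}`, then inductively
`t_{i+1} = max{t : ∃ s < t_i, (s,t) ∈ Γ}` and `s_{i+1} = min{s : (s,t_{i+1}) ∈ Γ}`,
terminating when `t_i = b`; ties in the label are resolved in favour of spacelike. -/
def laceOf (a b : ℕ) (Γ : Finset LEdge) : Finset LEdge :=
  insert (pickEdge Γ a ((Γ.filter (fun e => e.1.1 = a)).sup (fun e => e.1.2)))
    (laceAux Γ b (b - a) ((Γ.filter (fun e => e.1.1 = a)).sup (fun e => e.1.2)))

/-- A labelled lace on `{a,…,b}`: a connected labelled graph fixed by the lace map. -/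
def IsLace (a b : ℕ) (L : Finset LEdge) : Prop := LConnected a b L ∧ laceOf a b L = L

/-- The set of (new) labelled edges on `{a,…,b}` compatible with the lace `L`:
those whose addition does not alter the outcome of the lace algorithm. -/
def compatEdges (a b : ℕ) (L : Finset LEdge) : Finset LEdge :=
  (allLEdges a b).filter (fun e => e ∉ L ∧ laceOf a b (insert e L) = L)


/-!
Every connected graph `Γ` contains its lace `L_Γ`, and the algorithm only inspects maxima,
minima and spacelike memberships along its own run. Hence it returns the same lace on every
`Δ` with `L_Γ ⊆ Δ ⊆ Γ`; in particular `L_Γ` is a lace and every edge of `Γ \ L_Γ` is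
compatible with it. Conversely, agreement of all these maxima and minima with those of a lace
`L` survives unions, so `L ∪ S` has lace `L` for every set `S` of edges compatible with `L`.
The connected graphs with lace `L` are therefore exactly the `L ∪ S`, `S ⊆ C(L)`, and summing
`∏ w` over them gives `∏_{e ∈ L} w e * ∏_{e ∈ C(L)} (1 + w e)`.
-/

open Finset

theorem Finset.sum_prod_image_union_powerset {ι R : Type*} [DecidableEq ι] [CommSemiring R]
    {L C : Finset ι} (h : Disjoint L C) (w : ι → R) :
    ∑ Γ ∈ C.powerset.image (L ∪ ·), ∏ e ∈ Γ, w e = (∏ e ∈ L, w e) * ∏ e ∈ C, (1 + w e) := by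
  have hdisj : ∀ S ∈ C.powerset, Disjoint L S := fun S hS => h.mono_right (mem_powerset.1 hS)
  rw [sum_image, prod_one_add, mul_sum]
  · exact sum_congr rfl fun S hS => prod_union (hdisj S hS)
  · intro S₁ h₁ S₂ h₂ heq
    rw [← union_sdiff_cancel_left (hdisj S₁ h₁), ← union_sdiff_cancel_left (hdisj S₂ h₂)]
    exact congrArg (· \ L) heq

section Selection

variable {Γ Δ : Finset LEdge} {e : LEdge} {a b s t : ℕ}

lemma mem_allLEdges : e ∈ allLEdges a b ↔ a ≤ e.1.1 ∧ e.1.1 < e.1.2 ∧ e.1.2 ≤ b := by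
  simp only [allLEdges, mem_filter, mem_product, mem_Icc, mem_univ, and_true]
  omega

@[simp]
lemma pickEdge_fst (Γ : Finset LEdge) (s t : ℕ) : (pickEdge Γ s t).1 = (s, t) := by
  unfold pickEdge; split <;> rfl

lemma pickEdge_mem {τ : Bool} (h : ((s, t), τ) ∈ Γ) : pickEdge Γ s t ∈ Γ := by
  unfold pickEdge
  split_ifs with hsp
  · exact hsp
  · cases τ
    · exact h
    · exact absurd h hsp

lemma pickEdge_congr (h : ((s, t), true) ∈ Δ ↔ ((s, t), true) ∈ Γ) :
    pickEdge Δ s t = pickEdge Γ s t := by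
  unfold pickEdge; rw [if_congr h rfl rfl]

lemma mem_spacelike_iff_of_pickEdge_mem (hΔ : Δ ⊆ Γ) (h : pickEdge Γ s t ∈ Δ) :
    ((s, t), true) ∈ Δ ↔ ((s, t), true) ∈ Γ := by
  refine ⟨fun hsp => hΔ hsp, fun hsp => ?_⟩
  rwa [pickEdge, if_pos hsp] at h

/-- `minS` before the junk value `0` replaces an empty minimum; unlike `minS`, it turns unions
into `⊓`. -/
def minS' (Γ : Finset LEdge) (t : ℕ) : WithTop ℕ :=
  ((Γ.filter (fun e => e.1.2 = t)).image (fun e => e.1.1)).min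

lemma minS_eq_untopD : minS Γ t = (minS' Γ t).untopD 0 := rfl

lemma minS'_le (he : e ∈ Γ) (ht : e.1.2 = t) : minS' Γ t ≤ e.1.1 :=
  min_le (mem_image_of_mem _ (show e ∈ Γ.filter (fun e => e.1.2 = t) from mem_filter.2 ⟨he, ht⟩))

lemma minS'_anti (h : Δ ⊆ Γ) : minS' Γ t ≤ minS' Δ t :=
  min_mono (image_subset_image (filter_subset_filter _ h))

lemma minS'_union : minS' (Γ ∪ Δ) t = minS' Γ t ⊓ minS' Δ t := by
  unfold minS'; rw [filter_union, image_union, min_union]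

lemma minS'_eq_minS (he : e ∈ Γ) (ht : e.1.2 = t) : minS' Γ t = minS Γ t := by
  obtain ⟨m, hm⟩ := min_of_mem (mem_image_of_mem (fun e : LEdge => e.1.1)
    (show e ∈ Γ.filter (fun e => e.1.2 = t) from mem_filter.2 ⟨he, ht⟩))
  rw [minS_eq_untopD, minS', hm]
  rfl

lemma exists_mem_minS (he : e ∈ Γ) (ht : e.1.2 = t) : ∃ τ, ((minS Γ t, t), τ) ∈ Γ := by
  obtain ⟨e', he', hmin⟩ := mem_image.1 (mem_of_min (minS'_eq_minS he ht))
  obtain ⟨he'Γ, rfl⟩ := mem_filter.1 he'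
  refine ⟨e'.2, ?_⟩
  convert he'Γ
  exact_mod_cast hmin.symm

lemma minS_le (he : e ∈ Γ) (ht : e.1.2 = t) : minS Γ t ≤ e.1.1 := by
  have h := minS'_le he ht
  rw [minS'_eq_minS he ht] at h
  exact_mod_cast h

lemma le_nextT (he : e ∈ Γ) (h : e.1.1 < t) : e.1.2 ≤ nextT Γ t :=
  le_sup (f := fun e : LEdge => e.1.2) (mem_filter.2 ⟨he, h⟩)

lemma nextT_mono (h : Δ ⊆ Γ) : nextT Δ t ≤ nextT Γ t :=
  sup_mono (filter_subset_filter _ h)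

lemma nextT_union : nextT (Γ ∪ Δ) t = nextT Γ t ⊔ nextT Δ t := by
  unfold nextT; rw [filter_union, sup_union]

lemma nextT_le (hΓ : Γ ⊆ allLEdges a b) : nextT Γ t ≤ b :=
  Finset.sup_le fun _ he => (mem_allLEdges.1 (hΓ (mem_filter.1 he).1)).2.2

lemma exists_mem_nextT (h : ∃ e ∈ Γ, e.1.1 < t) : ∃ e ∈ Γ, e.1.1 < t ∧ e.1.2 = nextT Γ t := by
  obtain ⟨e₀, he₀, h₀⟩ := h
  obtain ⟨e, he, hsup⟩ :=
    exists_mem_eq_sup (Γ.filter (fun e => e.1.1 < t)) ⟨e₀, mem_filter.2 ⟨he₀, h₀⟩⟩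
      (fun e : LEdge => e.1.2)
  exact ⟨e, (mem_filter.1 he).1, (mem_filter.1 he).2, hsup.symm⟩

def nextEdge (Γ : Finset LEdge) (t : ℕ) : LEdge :=
  pickEdge Γ (minS Γ (nextT Γ t)) (nextT Γ t)

lemma laceAux_succ {n : ℕ} (h : t < b) :
    laceAux Γ b (n + 1) t = insert (nextEdge Γ t) (laceAux Γ b n (nextT Γ t)) := by
  rw [laceAux, if_neg h.not_ge, nextEdge]

end Selection

lemma LConnected.mono {a b : ℕ} {Γ Δ : Finset LEdge} (h : LConnected a b Γ) (hsub : Γ ⊆ Δ) :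
    LConnected a b Δ := by
  obtain ⟨hab, hcov, ⟨e₁, he₁, h₁⟩, ⟨e₂, he₂, h₂⟩⟩ := h
  exact ⟨hab, fun j hj hj' => (hcov j hj hj').imp fun e he => ⟨hsub he.1, he.2⟩,
    ⟨e₁, hsub he₁, h₁⟩, ⟨e₂, hsub he₂, h₂⟩⟩

section Connected

variable {a b t : ℕ} {Γ : Finset LEdge}

lemma exists_mem_nextT_of_connected (hc : LConnected a b Γ) (hat : a < t) (htb : t < b) :
    ∃ e ∈ Γ, e.1.1 < t ∧ e.1.2 = nextT Γ t := by
  obtain ⟨e, he, h, -⟩ := hc.2.1 t hat htb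
  exact exists_mem_nextT ⟨e, he, h⟩

lemma lt_nextT (hc : LConnected a b Γ) (hat : a < t) (htb : t < b) : t < nextT Γ t := by
  obtain ⟨e, he, h₁, h₂⟩ := hc.2.1 t hat htb
  exact h₂.trans_le (le_nextT he h₁)

lemma minS_nextT_lt (hc : LConnected a b Γ) (hat : a < t) (htb : t < b) :
    minS Γ (nextT Γ t) < t := by
  obtain ⟨e, he, h₁, h₂⟩ := exists_mem_nextT_of_connected hc hat htb
  exact (minS_le he h₂).trans_lt h₁

lemma minS'_nextT (hc : LConnected a b Γ) (hat : a < t) (htb : t < b) :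
    minS' Γ (nextT Γ t) = minS Γ (nextT Γ t) := by
  obtain ⟨e, he, -, h⟩ := exists_mem_nextT_of_connected hc hat htb
  exact minS'_eq_minS he h

lemma nextEdge_mem (hc : LConnected a b Γ) (hat : a < t) (htb : t < b) : nextEdge Γ t ∈ Γ := by
  obtain ⟨e, he, -, h⟩ := exists_mem_nextT_of_connected hc hat htb
  obtain ⟨τ, hτ⟩ := exists_mem_minS he h
  exact pickEdge_mem hτ

lemma laceAux_subset (hc : LConnected a b Γ) {n : ℕ} (hat : a < t) :
    laceAux Γ b n t ⊆ Γ := by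
  induction n generalizing t with
  | zero => simp [laceAux]
  | succ n ih =>
    rcases le_or_gt b t with hbt | htb
    · simp [laceAux, hbt]
    · rw [laceAux_succ htb]
      exact insert_subset (nextEdge_mem hc hat htb) (ih (hat.trans (lt_nextT hc hat htb)))

lemma laceAux_cover (hc : LConnected a b Γ) {n : ℕ} (hat : a < t) (hfuel : b ≤ t + n)
    {j : ℕ} (htj : t ≤ j) (hjb : j < b) : ∃ e ∈ laceAux Γ b n t, e.1.1 < j ∧ j < e.1.2 := by
  induction n generalizing t with
  | zero => omega
  | succ n ih =>
    have htb : t < b := htj.trans_lt hjb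
    have hnext := lt_nextT hc hat htb
    rw [laceAux_succ htb]
    rcases lt_or_ge j (nextT Γ t) with hj | hj
    · exact ⟨nextEdge Γ t, mem_insert_self _ _,
        by simpa [nextEdge] using ⟨(minS_nextT_lt hc hat htb).trans_le htj, hj⟩⟩
    · obtain ⟨e, he, h⟩ := ih (hat.trans hnext) (by omega) hj
      exact ⟨e, mem_insert_of_mem he, h⟩

lemma laceAux_reaches (hΓ : Γ ⊆ allLEdges a b) (hc : LConnected a b Γ) {n : ℕ} (hat : a < t)
    (htb : t < b) (hfuel : b ≤ t + n) : ∃ e ∈ laceAux Γ b n t, e.1.2 = b := by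
  induction n generalizing t with
  | zero => omega
  | succ n ih =>
    have hnext := lt_nextT hc hat htb
    rw [laceAux_succ htb]
    rcases lt_or_ge (nextT Γ t) b with hb | hb
    · obtain ⟨e, he, h⟩ := ih (hat.trans hnext) hb (by omega)
      exact ⟨e, mem_insert_of_mem he, h⟩
    · exact ⟨nextEdge Γ t, mem_insert_self _ _, by simpa [nextEdge] using (nextT_le hΓ).antisymm hb⟩

/-- As no edge starts below `a`, the special first step of `laceOf` is an ordinary step of
`laceAux` from `a + 1`. -/
lemma laceOf_eq_laceAux (hΓ : Γ ⊆ allLEdges a b) (hc : LConnected a b Γ) :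
    laceOf a b Γ = laceAux Γ b (b - a + 1) (a + 1) := by
  have hstart : ∀ e ∈ Γ, e.1.1 < a + 1 ↔ e.1.1 = a := fun e he => by
    have := (mem_allLEdges.1 (hΓ he)).1; omega
  have hT : nextT Γ (a + 1) = (Γ.filter (fun e => e.1.1 = a)).sup (fun e => e.1.2) := by
    unfold nextT; rw [filter_congr hstart]
  obtain ⟨e₀, he₀, h₀⟩ := hc.2.2.1
  obtain ⟨e, he, he₁, he₂⟩ := exists_mem_nextT (t := a + 1) ⟨e₀, he₀, by omega⟩
  obtain ⟨τ, hτ⟩ := exists_mem_minS he he₂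
  have hs : minS Γ (nextT Γ (a + 1)) = a :=
    le_antisymm (by have := minS_le he he₂; omega) (mem_allLEdges.1 (hΓ hτ)).1
  rw [laceAux_succ (by have := hc.1; omega), nextEdge, hs, hT]
  rfl

lemma laceOf_subset (hΓ : Γ ⊆ allLEdges a b) (hc : LConnected a b Γ) : laceOf a b Γ ⊆ Γ := by
  rw [laceOf_eq_laceAux hΓ hc]
  exact laceAux_subset hc (lt_add_one a)

lemma laceOf_connected (hΓ : Γ ⊆ allLEdges a b) (hc : LConnected a b Γ) :
    LConnected a b (laceOf a b Γ) := by
  rw [laceOf_eq_laceAux hΓ hc]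
  have hfuel : b ≤ a + 1 + (b - a + 1) := by omega
  obtain ⟨e, he, h, -⟩ := laceAux_cover hc (lt_add_one a) hfuel le_rfl hc.1
  have ha := (mem_allLEdges.1 (hΓ (laceAux_subset hc (lt_add_one a) he))).1
  exact ⟨hc.1, fun j haj hjb => laceAux_cover hc (lt_add_one a) hfuel haj hjb,
    ⟨e, he, by omega⟩, laceAux_reaches hΓ hc (lt_add_one a) hc.1 hfuel⟩

end Connected

section Agreement

variable {a b t : ℕ} {Γ Δ Δ₁ Δ₂ : Finset LEdge}

def StepAgree (Γ Δ : Finset LEdge) (t : ℕ) : Prop :=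
  nextT Δ t = nextT Γ t ∧ minS' Δ (nextT Γ t) = minS' Γ (nextT Γ t) ∧
    (((minS Γ (nextT Γ t), nextT Γ t), true) ∈ Δ ↔ ((minS Γ (nextT Γ t), nextT Γ t), true) ∈ Γ)

lemma StepAgree.refl (Γ : Finset LEdge) (t : ℕ) : StepAgree Γ Γ t := ⟨rfl, rfl, Iff.rfl⟩

lemma StepAgree.minS_eq (h : StepAgree Γ Δ t) : minS Δ (nextT Γ t) = minS Γ (nextT Γ t) :=
  congrArg (WithTop.untopD 0) h.2.1

lemma StepAgree.nextEdge_eq (h : StepAgree Γ Δ t) : nextEdge Δ t = nextEdge Γ t := by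
  rw [nextEdge, nextEdge, h.1, h.minS_eq, pickEdge_congr h.2.2]

lemma StepAgree.symm (h : StepAgree Γ Δ t) : StepAgree Δ Γ t := by
  refine ⟨h.1.symm, ?_, ?_⟩ <;> rw [h.1]
  · exact h.2.1.symm
  · rw [h.minS_eq]; exact h.2.2.symm

lemma StepAgree.union (h₁ : StepAgree Γ Δ₁ t) (h₂ : StepAgree Γ Δ₂ t) :
    StepAgree Γ (Δ₁ ∪ Δ₂) t := by
  refine ⟨?_, ?_, ?_⟩
  · rw [nextT_union, h₁.1, h₂.1, sup_idem]
  · rw [minS'_union, h₁.2.1, h₂.2.1, inf_idem]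
  · rw [mem_union, h₁.2.2, h₂.2.2, or_self]

lemma stepAgree_of_subset (hc : LConnected a b Γ) (hat : a < t) (htb : t < b) (hΔ : Δ ⊆ Γ)
    (h : nextEdge Γ t ∈ Δ) : StepAgree Γ Δ t := by
  have hfst : (nextEdge Γ t).1 = (minS Γ (nextT Γ t), nextT Γ t) := pickEdge_fst _ _ _
  refine ⟨(nextT_mono hΔ).antisymm ?_, (minS'_anti hΔ).antisymm' ?_,
    mem_spacelike_iff_of_pickEdge_mem hΔ h⟩
  · simpa [hfst] using le_nextT h (by simpa [hfst] using minS_nextT_lt hc hat htb)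
  · simpa [hfst, minS'_nextT hc hat htb] using minS'_le h (by simp [hfst])

/-- Equality of the outputs of the algorithm is not preserved under unions; agreement of
every maximum and minimum along the run on `Γ` is. -/
def SameRun (b : ℕ) (Γ Δ : Finset LEdge) : ℕ → ℕ → Prop
  | 0, _ => True
  | n + 1, t => b ≤ t ∨ StepAgree Γ Δ t ∧ SameRun b Γ Δ n (nextT Γ t)

lemma SameRun.refl (b : ℕ) (Γ : Finset LEdge) (n t : ℕ) : SameRun b Γ Γ n t := by
  induction n generalizing t with
  | zero => trivial
  | succ n ih => exact Or.inr ⟨StepAgree.refl Γ t, ih _⟩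

lemma SameRun.symm {n : ℕ} (h : SameRun b Γ Δ n t) : SameRun b Δ Γ n t := by
  induction n generalizing t with
  | zero => trivial
  | succ n ih =>
    obtain hbt | ⟨hstep, hrun⟩ := h
    · exact Or.inl hbt
    · exact Or.inr ⟨hstep.symm, hstep.1 ▸ ih hrun⟩

lemma SameRun.union {n : ℕ} (h₁ : SameRun b Γ Δ₁ n t) (h₂ : SameRun b Γ Δ₂ n t) :
    SameRun b Γ (Δ₁ ∪ Δ₂) n t := by
  induction n generalizing t with
  | zero => trivial
  | succ n ih =>
    obtain hbt | ⟨hstep₁, hrun₁⟩ := h₁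
    · exact Or.inl hbt
    obtain hbt | ⟨hstep₂, hrun₂⟩ := h₂
    · exact Or.inl hbt
    exact Or.inr ⟨hstep₁.union hstep₂, ih hrun₁ hrun₂⟩

lemma sameRun_union_of_forall {n : ℕ} {S : Finset LEdge}
    (h : ∀ e ∈ S, SameRun b Γ (insert e Γ) n t) : SameRun b Γ (Γ ∪ S) n t := by
  induction S using Finset.induction_on with
  | empty => simpa using SameRun.refl b Γ n t
  | insert e S _ ih =>
    have hrun := (ih fun x hx => h x (mem_insert_of_mem hx)).union (h e (mem_insert_self e S))
    rwa [show Γ ∪ S ∪ insert e Γ = Γ ∪ insert e S by ext; simp only [mem_union, mem_insert]; tauto]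
      at hrun

lemma laceAux_congr {n : ℕ} (h : SameRun b Γ Δ n t) : laceAux Δ b n t = laceAux Γ b n t := by
  induction n generalizing t with
  | zero => rfl
  | succ n ih =>
    rcases le_or_gt b t with hbt | htb
    · simp [laceAux, hbt]
    · obtain hbt | ⟨hstep, hrun⟩ := h
      · omega
      · rw [laceAux_succ htb, laceAux_succ htb, hstep.nextEdge_eq, hstep.1, ih hrun]

lemma sameRun_of_subset (hc : LConnected a b Γ) (hΔ : Δ ⊆ Γ) {n : ℕ} (hat : a < t)
    (h : laceAux Γ b n t ⊆ Δ) : SameRun b Γ Δ n t := by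
  induction n generalizing t with
  | zero => trivial
  | succ n ih =>
    rcases le_or_gt b t with hbt | htb
    · exact Or.inl hbt
    rw [laceAux_succ htb, insert_subset_iff] at h
    exact Or.inr ⟨stepAgree_of_subset hc hat htb hΔ h.1,
      ih (hat.trans (lt_nextT hc hat htb)) h.2⟩

end Agreement

section Laces

variable {a b : ℕ} {Γ Δ L S : Finset LEdge}

theorem laceOf_eq_of_subset (hΓ : Γ ⊆ allLEdges a b) (hc : LConnected a b Γ) (hΔ : Δ ⊆ Γ)
    (hL : laceOf a b Γ ⊆ Δ) : laceOf a b Δ = laceOf a b Γ := by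
  have hcΔ : LConnected a b Δ := (laceOf_connected hΓ hc).mono hL
  rw [laceOf_eq_laceAux hΓ hc] at hL ⊢
  rw [laceOf_eq_laceAux (hΔ.trans hΓ) hcΔ]
  exact laceAux_congr (sameRun_of_subset hc hΔ (lt_add_one a) hL)

theorem isLace_laceOf (hΓ : Γ ⊆ allLEdges a b) (hc : LConnected a b Γ) :
    IsLace a b (laceOf a b Γ) :=
  ⟨laceOf_connected hΓ hc, laceOf_eq_of_subset hΓ hc (laceOf_subset hΓ hc) subset_rfl⟩

lemma disjoint_compatEdges (L : Finset LEdge) : Disjoint L (compatEdges a b L) :=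
  disjoint_right.2 fun _ he => (mem_filter.1 he).2.1

theorem laceOf_union_compatEdges (hLa : L ⊆ allLEdges a b) (hL : IsLace a b L)
    (hS : S ⊆ compatEdges a b L) : laceOf a b (L ∪ S) = L := by
  have hrun : ∀ e ∈ S, SameRun b L (insert e L) (b - a + 1) (a + 1) := by
    intro e he
    obtain ⟨he, -, hlace⟩ := mem_filter.1 (hS he)
    have hΓ : insert e L ⊆ allLEdges a b := insert_subset he hLa
    have hc : LConnected a b (insert e L) := hL.1.mono (subset_insert e L)
    refine (sameRun_of_subset hc (subset_insert e L) (lt_add_one a) ?_).symm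
    rw [← laceOf_eq_laceAux hΓ hc, hlace]
  have hSa : S ⊆ allLEdges a b := hS.trans (filter_subset _ _)
  rw [laceOf_eq_laceAux (union_subset hLa hSa) (hL.1.mono subset_union_left),
    laceAux_congr (sameRun_union_of_forall hrun), ← laceOf_eq_laceAux hLa hL.1, hL.2]

theorem filter_laceOf_eq_image (hLa : L ⊆ allLEdges a b) (hL : IsLace a b L) :
    {Γ ∈ (allLEdges a b).powerset.filter (LConnected a b) | laceOf a b Γ = L}
      = (compatEdges a b L).powerset.image (L ∪ ·) := by
  ext Γ
  simp only [mem_filter, mem_powerset, mem_image]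
  constructor
  · rintro ⟨⟨hΓ, hc⟩, rfl⟩
    refine ⟨Γ \ laceOf a b Γ, fun e he => ?_, union_sdiff_of_subset (laceOf_subset hΓ hc)⟩
    obtain ⟨heΓ, heL⟩ := mem_sdiff.1 he
    exact mem_filter.2 ⟨hΓ heΓ, heL, laceOf_eq_of_subset hΓ hc
      (insert_subset heΓ (laceOf_subset hΓ hc)) (subset_insert _ _)⟩
  · rintro ⟨S, hS, rfl⟩
    exact ⟨⟨union_subset hLa (hS.trans (filter_subset _ _)), hL.1.mono subset_union_left⟩,
      laceOf_union_compatEdges hLa hL hS⟩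

end Laces

theorem lace_prescription_general (a b : ℕ) (w : LEdge → ℝ) :
    ∑ Γ ∈ (allLEdges a b).powerset.filter (LConnected a b), ∏ e ∈ Γ, w e
      = ∑ L ∈ (allLEdges a b).powerset.filter (IsLace a b),
          (∏ e ∈ L, w e) * ∏ e' ∈ compatEdges a b L, (1 + w e') := by
  have hmaps : ∀ Γ ∈ (allLEdges a b).powerset.filter (LConnected a b),
      laceOf a b Γ ∈ (allLEdges a b).powerset.filter (IsLace a b) := by
    intro Γ hΓ
    rw [mem_filter, mem_powerset] at hΓ ⊢
    exact ⟨(laceOf_subset hΓ.1 hΓ.2).trans hΓ.1, isLace_laceOf hΓ.1 hΓ.2⟩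
  rw [← sum_fiberwise_of_maps_to hmaps]
  refine sum_congr rfl fun L hL => ?_
  rw [mem_filter, mem_powerset] at hL
  rw [filter_laceOf_eq_image hL.1 hL.2, sum_prod_image_union_powerset (disjoint_compatEdges L)]

/-- **Lace prescription for labelled graphs.**  For every weight `w` on labelled edges,
the sum over connected labelled graphs on `{a,…,b}` of the product of edge weights
equals the sum over labelled laces `L` of the product of its edge weights times
`∏_{e' compatible with L} (1 + w e')`. -/
theorem lace_prescription (a b : ℕ) (hab : a < b) (w : LEdge → ℝ) :
    ∑ Γ ∈ (allLEdges a b).powerset.filter (LConnected a b), ∏ e ∈ Γ, w e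
      = ∑ L ∈ (allLEdges a b).powerset.filter (IsLace a b),
          (∏ e ∈ L, w e) * ∏ e' ∈ compatEdges a b L, (1 + w e') :=
  lace_prescription_general a b w
end

section
/- Let D̂(k) = (1/d)·Σ_{j=1}^d cos(k_j) for k ∈ [−π,π]^d. For every positive integer r there is a constant K, independent of d, such that for all dimensions d > 2r the integral ∫_{[−π,π]^d} (1 − D̂(k))^{−r} d^d k/(2π)^d is finite and at most 1 + K/d. -/
open MeasureTheory Real

noncomputable section

/-- The Fourier transform `D̂(k) = (1/d)·Σ_{j=1}^d cos(k_j)` of the single-step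
distribution of simple random walk on ℤ^d. -/
def Dhat (d : ℕ) (k : Fin d → ℝ) : ℝ := (1 / (d : ℝ)) * ∑ j, Real.cos (k j)

/-!
Write `y = 1 - D̂(k) ∈ [0, 2]` and integrate against the normalized measure on the torus, under
which the `cos kⱼ` are independent with mean `0` and second moment `1/2`.

Where `y ≥ 1/4`, `y⁻ʳ` is dominated by the quadratic `1 + r D̂ + 16ʳ D̂²` (a Taylor bound at
`y = 1`), whose mean is `1 + 16ʳ / 2d`.

Where `y < 1/4`, decompose dyadically, `4^-(n+2) < y ≤ 4^-(n+1)`. A Chernoff bound, in which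
`1 - cos x ≥ 2x²/π²` reduces the moment generating function of `1 - cos` to a Gaussian integral,
gives `P(y ≤ s²) ≤ (3s/2)^d`. Since `d > 2r`, the resulting series `∑ 4^(r(n+2)) (3/4)^d 2^(-nd)`
is dominated by a geometric series of ratio `1/2`, so this part is at most `2·16ʳ (3/4)^d = O(1/d)`.
-/

open ProbabilityTheory Set
open scoped ENNReal

section Conditioning

variable {Ω : Type*} [MeasurableSpace Ω] {μ : Measure Ω} {s : Set Ω}

theorem restrict_eq_measure_smul_cond (h0 : μ s ≠ 0) (htop : μ s ≠ ∞) :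
    μ.restrict s = μ s • μ[|s] := by
  rw [ProbabilityTheory.cond, smul_smul, ENNReal.mul_inv_cancel h0 htop, one_smul]

theorem integral_cond_eq (f : Ω → ℝ) : ∫ x, f x ∂μ[|s] = (μ.real s)⁻¹ * ∫ x in s, f x ∂μ := by
  rw [ProbabilityTheory.cond, integral_smul_measure, measureReal_def, ENNReal.toReal_inv,
    smul_eq_mul]

theorem pi_restrict_eq_smul_pi_cond {ι : Type*} [Fintype ι] [SigmaFinite μ]
    (h0 : μ s ≠ 0) (htop : μ s ≠ ∞) :
    Measure.pi (fun _ : ι => μ.restrict s)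
      = μ s ^ Fintype.card ι • Measure.pi (fun _ => μ[|s]) := by
  have := cond_isProbabilityMeasure_of_finite h0 htop
  refine Measure.pi_eq fun t ht => ?_
  simp [Measure.pi_pi, restrict_eq_measure_smul_cond h0 htop, Finset.prod_mul_distrib]

end Conditioning

section RealInequalities

theorem inv_one_sub_pow_le (r : ℕ) {x : ℝ} (hx₁ : -1 ≤ x) (hx₂ : x ≤ 3 / 4) :
    (1 - x)⁻¹ ^ r ≤ 1 + r * x + 16 ^ r * x ^ 2 := by
  induction r with
  | zero => simp; positivity
  | succ r ih =>
    have hpos : 0 < 1 - x := by linarith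
    have hinv : (1 - x)⁻¹ ≤ 1 + x + 4 * x ^ 2 := by
      rw [inv_le_iff_one_le_mul₀ hpos]
      nlinarith [sq_nonneg x]
    have hC : (5 * r + 4 : ℝ) ≤ 10 * 16 ^ r := by
      have : (r : ℝ) + 1 ≤ 16 ^ r := by exact_mod_cast Nat.lt_pow_self (by norm_num : 1 < 16)
      nlinarith
    have hx3 : x ^ 3 ≤ x ^ 2 := by nlinarith [sq_nonneg x]
    have hx4 : x ^ 4 ≤ x ^ 2 := by nlinarith [sq_nonneg x]
    calc (1 - x)⁻¹ ^ (r + 1) = (1 - x)⁻¹ ^ r * (1 - x)⁻¹ := pow_succ _ _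
      _ ≤ (1 + r * x + 16 ^ r * x ^ 2) * (1 + x + 4 * x ^ 2) :=
          mul_le_mul ih hinv (by positivity) ((by positivity : (0 : ℝ) ≤ _).trans ih)
      _ ≤ 1 + ↑(r + 1) * x + 16 ^ (r + 1) * x ^ 2 := by
          push_cast
          nlinarith [mul_le_mul_of_nonneg_left hx3 (by positivity : (0 : ℝ) ≤ 4 * r + 16 ^ r),
            mul_le_mul_of_nonneg_left hx4 (by positivity : (0 : ℝ) ≤ 4 * 16 ^ r),
            mul_nonneg (sub_nonneg.2 hC) (sq_nonneg x), pow_succ (16 : ℝ) r]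

theorem one_add_mul_add_mul_sq_nonneg (r : ℕ) {x : ℝ} (hx : -1 ≤ x) :
    0 ≤ 1 + r * x + 16 ^ r * x ^ 2 := by
  rcases le_or_gt 0 x with h | h
  · positivity
  · exact (pow_nonneg (inv_nonneg.mpr (by linarith)) r).trans
      (inv_one_sub_pow_le r hx (by linarith))

theorem ofReal_inv_pow_le_tsum_indicator (r : ℕ) {y : ℝ} (hy₀ : 0 ≤ y) (hy : y < 1 / 4) :
    ENNReal.ofReal (y⁻¹ ^ r) ≤ ∑' n : ℕ,
      (Iic ((4 : ℝ) ^ (n + 1))⁻¹).indicator (fun _ => ENNReal.ofReal (4 ^ (r * (n + 2)))) y := by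
  rcases hy₀.eq_or_lt with rfl | hy_pos
  · -- `0⁻¹ = 0`, so the left-hand side is at most `1`
    refine le_trans ?_ (ENNReal.le_tsum 0)
    rw [indicator_of_mem (by simp)]
    gcongr
    rw [inv_zero]
    exact (pow_le_one₀ le_rfl zero_le_one).trans (one_le_pow₀ (by norm_num))
  obtain ⟨n, hn, hn'⟩ := exists_nat_pow_near (x := y⁻¹ / 4) (y := 4)
    (by rw [le_div_iff₀ (by norm_num), one_mul, le_inv_comm₀ (by norm_num) hy_pos]; linarith)
    (by norm_num)
  refine le_trans ?_ (ENNReal.le_tsum n)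
  have hmem : y ≤ ((4 : ℝ) ^ (n + 1))⁻¹ := by
    rw [le_inv_comm₀ hy_pos (by positivity), pow_succ]
    linarith
  rw [indicator_of_mem (mem_Iic.mpr hmem), pow_mul']
  gcongr
  rw [pow_succ]
  linarith

theorem ofReal_inv_one_sub_pow_le (r : ℕ) {x : ℝ} (hx₁ : -1 ≤ x) (hx₂ : x ≤ 1) :
    ENNReal.ofReal ((1 - x)⁻¹ ^ r) ≤ ENNReal.ofReal (1 + r * x + 16 ^ r * x ^ 2) + ∑' n : ℕ,
      (Iic ((4 : ℝ) ^ (n + 1))⁻¹).indicator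
        (fun _ => ENNReal.ofReal (4 ^ (r * (n + 2)))) (1 - x) := by
  rcases le_or_gt x (3 / 4) with h | h
  · exact le_add_right (ENNReal.ofReal_le_ofReal (inv_one_sub_pow_le r hx₁ h))
  · exact le_add_left (ofReal_inv_pow_le_tsum_indicator r (by linarith) (by linarith))

theorem natCast_mul_three_quarters_pow_le (d : ℕ) : (d : ℝ) * (3 / 4) ^ d ≤ 3 := by
  have hbernoulli : 1 + d * (1 / 3 : ℝ) ≤ (1 + 1 / 3) ^ d := one_add_mul_le_pow (by norm_num) d
  have hinv : ((3 : ℝ) / 4) ^ d * (1 + 1 / 3) ^ d = 1 := by rw [← mul_pow]; norm_num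
  nlinarith [mul_le_mul_of_nonneg_left hbernoulli (by positivity : (0 : ℝ) ≤ (3 / 4) ^ d)]

theorem exp_half_mul_sqrt_pi_le_three : exp (1 / 2) * √π ≤ 3 := by
  rw [exp_half, ← sqrt_mul (exp_pos 1).le, sqrt_le_left (by norm_num)]
  nlinarith [exp_one_lt_d9, pi_lt_d2, exp_pos 1, pi_pos]

end RealInequalities

section UniformOnCircle

instance : IsProbabilityMeasure (volume[|Icc (-π) π]) :=
  cond_isProbabilityMeasure_of_finite (by simp [pi_pos]) (by simp)

theorem volume_real_Icc_neg_pi_pi : volume.real (Icc (-π) π) = 2 * π := by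
  rw [Real.volume_real_Icc_of_le (by linarith [pi_pos])]; ring

theorem setIntegral_Icc_eq_intervalIntegral {a b : ℝ} (hab : a ≤ b) (f : ℝ → ℝ) :
    ∫ x in Icc a b, f x = ∫ x in a..b, f x := by
  rw [integral_Icc_eq_integral_Ioc, intervalIntegral.integral_of_le hab]

theorem integral_cos_uniform : ∫ x, cos x ∂volume[|Icc (-π) π] = 0 := by
  simp [integral_cond_eq, setIntegral_Icc_eq_intervalIntegral (neg_le_self pi_pos.le)]

theorem integral_cos_sq_uniform : ∫ x, cos x ^ 2 ∂volume[|Icc (-π) π] = 1 / 2 := by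
  rw [integral_cond_eq, setIntegral_Icc_eq_intervalIntegral (neg_le_self pi_pos.le),
    integral_cos_sq, volume_real_Icc_neg_pi_pi]
  field_simp
  simp; ring

theorem integral_exp_neg_mul_one_sub_cos_le {b : ℝ} (hb : 0 < b) :
    ∫ x in Icc (-π) π, exp (-b * (1 - cos x)) ≤ √(π ^ 3 / (2 * b)) := by
  set a := 2 * b / π ^ 2
  have hgauss : Integrable (fun x : ℝ => exp (-a * x ^ 2)) :=
    integrable_exp_neg_mul_sq (by positivity)
  have hle : ∀ x ∈ Icc (-π) π, exp (-b * (1 - cos x)) ≤ exp (-a * x ^ 2) := fun x hx => by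
    have := cos_le_one_sub_mul_cos_sq (abs_le.mpr hx)
    rw [exp_le_exp]
    linear_combination b * this
  calc ∫ x in Icc (-π) π, exp (-b * (1 - cos x))
      ≤ ∫ x in Icc (-π) π, exp (-a * x ^ 2) :=
        setIntegral_mono_on (Continuous.integrableOn_Icc (by fun_prop)) hgauss.integrableOn
          measurableSet_Icc hle
    _ ≤ ∫ x, exp (-a * x ^ 2) :=
        setIntegral_le_integral hgauss (.of_forall fun x => (exp_pos _).le)
    _ = √(π ^ 3 / (2 * b)) := by
        rw [integral_gaussian]; congr 1; simp only [a]; field_simp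

theorem mgf_one_sub_cos_uniform_le {b : ℝ} (hb : 0 < b) :
    mgf (fun x => 1 - cos x) (volume[|Icc (-π) π]) (-b) ≤ √(π / (8 * b)) := by
  rw [mgf, integral_cond_eq, volume_real_Icc_neg_pi_pi]
  calc (2 * π)⁻¹ * ∫ x in Icc (-π) π, exp (-b * (1 - cos x))
      ≤ (2 * π)⁻¹ * √(π ^ 3 / (2 * b)) := by
        gcongr; exact integral_exp_neg_mul_one_sub_cos_le hb
    _ = √(π / (8 * b)) := by
        rw [← sqrt_sq (by positivity : 0 ≤ (2 * π)⁻¹), ← sqrt_mul (by positivity)]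
        congr 1
        field_simp
        ring

end UniformOnCircle

theorem abs_Dhat_le_one (d : ℕ) (k : Fin d → ℝ) : |Dhat d k| ≤ 1 := by
  rcases Nat.eq_zero_or_pos d with rfl | hd
  · simp [Dhat]
  rw [Dhat, abs_mul, abs_of_pos (by positivity), one_div, inv_mul_le_one₀ (by positivity)]
  calc |∑ j, cos (k j)| ≤ ∑ j, |cos (k j)| := Finset.abs_sum_le_sum_abs _ _
    _ ≤ ∑ _j : Fin d, 1 := Finset.sum_le_sum fun j _ => abs_cos_le_one _
    _ = d := by simp

@[fun_prop]
theorem continuous_Dhat (d : ℕ) : Continuous (Dhat d) := by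
  unfold Dhat; fun_prop

theorem sum_one_sub_cos_eq {d : ℕ} (hd : d ≠ 0) (k : Fin d → ℝ) :
    ∑ j, (1 - cos (k j)) = d * (1 - Dhat d k) := by
  rw [Finset.sum_sub_distrib, Dhat]
  field_simp
  simp

def torusMeasure (d : ℕ) : Measure (Fin d → ℝ) := Measure.pi fun _ => volume[|Icc (-π) π]

instance (d : ℕ) : IsProbabilityMeasure (torusMeasure d) := by
  unfold torusMeasure; infer_instance

theorem volume_restrict_pi_Icc_eq_smul_torusMeasure (d : ℕ) :
    volume.restrict (univ.pi fun _ : Fin d => Icc (-π) π)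
      = ENNReal.ofReal ((2 * π) ^ d) • torusMeasure d := by
  rw [volume_pi, Measure.restrict_pi_pi, pi_restrict_eq_smul_pi_cond (by simp [pi_pos]) (by simp),
    Real.volume_Icc, ENNReal.ofReal_pow (by positivity), Fintype.card_fin, torusMeasure]
  ring_nf

namespace torusMeasure

variable {d : ℕ}

theorem integral_comp_apply {f : ℝ → ℝ} (hf : AEStronglyMeasurable f (volume[|Icc (-π) π]))
    (j : Fin d) : ∫ k, f (k j) ∂torusMeasure d = ∫ x, f x ∂volume[|Icc (-π) π] :=
  integral_comp_eval hf

theorem integral_cos_mul_cos (i j : Fin d) :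
    ∫ k, cos (k i) * cos (k j) ∂torusMeasure d = if i = j then 1 / 2 else 0 := by
  split_ifs with hij
  · subst hij
    simpa [← sq] using (integral_comp_apply (f := fun x => cos x ^ 2)
      (by fun_prop : Continuous _).aestronglyMeasurable i).trans integral_cos_sq_uniform
  · have hind : IndepFun (fun k : Fin d → ℝ => cos (k i)) (fun k => cos (k j)) (torusMeasure d) :=
      (iIndepFun_pi (X := fun _ => cos) fun _ => continuous_cos.aemeasurable).indepFun hij
    rw [hind.integral_fun_mul_eq_mul_integral (by fun_prop : Continuous _).aestronglyMeasurable
      (by fun_prop : Continuous _).aestronglyMeasurable,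
      integral_comp_apply continuous_cos.aestronglyMeasurable, integral_cos_uniform, zero_mul]

theorem integral_Dhat : ∫ k, Dhat d k ∂torusMeasure d = 0 := by
  simp only [Dhat]
  rw [integral_const_mul, integral_finsetSum _ fun j _ =>
    Integrable.of_bound (by fun_prop : Continuous fun k : Fin d → ℝ => cos (k j)).aestronglyMeasurable
      1 (.of_forall fun k => abs_cos_le_one _)]
  simp [integral_comp_apply continuous_cos.aestronglyMeasurable, integral_cos_uniform]

theorem integral_Dhat_sq : ∫ k, Dhat d k ^ 2 ∂torusMeasure d = 1 / (2 * d) := by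
  have hint : ∀ i j : Fin d,
      Integrable (fun k : Fin d → ℝ => cos (k i) * cos (k j)) (torusMeasure d) :=
    fun i j => Integrable.of_bound (by fun_prop : Continuous _).aestronglyMeasurable 1
      (.of_forall fun k => by
        rw [Real.norm_eq_abs, abs_mul]
        exact mul_le_one₀ (abs_cos_le_one _) (abs_nonneg _) (abs_cos_le_one _))
  simp only [Dhat, mul_pow, sq (∑ j, cos _), Finset.sum_mul_sum]
  rw [integral_const_mul,
    integral_finsetSum _ fun i _ => integrable_finsetSum _ fun j _ => hint i j]
  simp only [integral_finsetSum _ fun j _ => hint _ j, integral_cos_mul_cos, Finset.sum_ite_eq,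
    Finset.mem_univ, if_true, Finset.sum_const, Finset.card_univ, Fintype.card_fin, nsmul_eq_mul]
  rcases Nat.eq_zero_or_pos d with rfl | hd
  · simp
  · field_simp

theorem mgf_sum_one_sub_cos (t : ℝ) :
    mgf (fun k => ∑ j, (1 - cos (k j))) (torusMeasure d) t
      = mgf (fun x => 1 - cos x) (volume[|Icc (-π) π]) t ^ d := by
  simp only [mgf, Finset.mul_sum, exp_sum]
  rw [torusMeasure, integral_fintype_prod_eq_pow (fun x => exp (t * (1 - cos x))),
    Fintype.card_fin]

theorem measureReal_one_sub_Dhat_le_sq_le {s : ℝ} (hs : 0 < s) :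
    (torusMeasure d).real {k | 1 - Dhat d k ≤ s ^ 2} ≤ (3 * s / 2) ^ d := by
  rcases eq_or_ne d 0 with rfl | hd
  · simp
  -- `b` minimises `exp (b s²) * √(π / (8 b))`
  set b := (2 * s ^ 2)⁻¹
  have hb : 0 < b := by positivity
  have hset : {k | 1 - Dhat d k ≤ s ^ 2} = {k | ∑ j, (1 - cos (k j)) ≤ d * s ^ 2} := by
    ext k
    show _ ↔ _ ≤ (d : ℝ) * s ^ 2
    rw [sum_one_sub_cos_eq hd]
    exact (mul_le_mul_iff_right₀ (by positivity : (0 : ℝ) < d)).symm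
  have hint : Integrable (fun k : Fin d → ℝ => exp (-b * ∑ j, (1 - cos (k j))))
      (torusMeasure d) :=
    Integrable.of_bound (by fun_prop : Continuous _).aestronglyMeasurable 1
      (.of_forall fun k => by
        rw [Real.norm_eq_abs, abs_of_pos (exp_pos _), exp_le_one_iff]
        exact mul_nonpos_of_nonpos_of_nonneg (neg_nonpos.mpr hb.le)
          (Finset.sum_nonneg fun j _ => sub_nonneg.mpr (cos_le_one _)))
  have hmgf : mgf (fun x => 1 - cos x) (volume[|Icc (-π) π]) (-b) ≤ s * √π / 2 := by
    refine (mgf_one_sub_cos_uniform_le hb).trans_eq ?_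
    rw [show π / (8 * b) = (s / 2) ^ 2 * π by simp only [b]; field_simp; ring,
      sqrt_mul (sq_nonneg _), sqrt_sq (by positivity)]
    ring
  rw [hset]
  calc (torusMeasure d).real {k | ∑ j, (1 - cos (k j)) ≤ d * s ^ 2}
      ≤ exp (-(-b) * (d * s ^ 2)) * mgf (fun k => ∑ j, (1 - cos (k j))) (torusMeasure d) (-b) :=
        measure_le_le_exp_mul_mgf _ (neg_nonpos.mpr hb.le) hint
    _ = (exp (1 / 2) * mgf (fun x => 1 - cos x) (volume[|Icc (-π) π]) (-b)) ^ d := by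
        rw [mgf_sum_one_sub_cos, mul_pow, ← exp_nat_mul]
        congr 2
        simp only [b]
        field_simp
    _ ≤ (exp (1 / 2) * (s * √π / 2)) ^ d := by
        gcongr
        exact mul_nonneg (exp_pos _).le mgf_nonneg
    _ ≤ (3 * s / 2) ^ d := by
        gcongr
        nlinarith [exp_half_mul_sqrt_pi_le_three]

theorem lintegral_ofReal_quadratic_Dhat (r : ℕ) :
    ∫⁻ k, ENNReal.ofReal (1 + r * Dhat d k + 16 ^ r * Dhat d k ^ 2) ∂torusMeasure d
      = ENNReal.ofReal (1 + 16 ^ r / (2 * d)) := by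
  have hpow : ∀ n : ℕ, Integrable (fun k => Dhat d k ^ n) (torusMeasure d) := fun n =>
    Integrable.of_bound ((continuous_Dhat d).pow n).aestronglyMeasurable 1 (.of_forall fun k => by
      rw [norm_pow, Real.norm_eq_abs]; exact pow_le_one₀ (abs_nonneg _) (abs_Dhat_le_one d k))
  have hDhat : Integrable (Dhat d) (torusMeasure d) := by simpa using hpow 1
  have hlin : Integrable (fun k => 1 + (r : ℝ) * Dhat d k) (torusMeasure d) :=
    (integrable_const 1).add (hDhat.const_mul r)
  have hsq : Integrable (fun k => (16 : ℝ) ^ r * Dhat d k ^ 2) (torusMeasure d) :=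
    (hpow 2).const_mul _
  have hG : Integrable (fun k => 1 + (r : ℝ) * Dhat d k + 16 ^ r * Dhat d k ^ 2)
      (torusMeasure d) :=
    hlin.add hsq
  rw [← ofReal_integral_eq_lintegral_ofReal hG
    (.of_forall fun k => one_add_mul_add_mul_sq_nonneg r (abs_le.mp (abs_Dhat_le_one d k)).1),
    integral_add hlin hsq, integral_add (integrable_const 1) (hDhat.const_mul r),
    integral_const_mul, integral_const_mul, integral_Dhat, integral_Dhat_sq]
  simp [div_eq_mul_inv]

theorem ofReal_mul_measure_one_sub_Dhat_le (r n : ℕ) :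
    ENNReal.ofReal (4 ^ (r * (n + 2))) * torusMeasure d {k | 1 - Dhat d k ≤ ((4 : ℝ) ^ (n + 1))⁻¹}
      ≤ ENNReal.ofReal (16 ^ r * (3 / 4) ^ d) * ENNReal.ofReal (4 ^ r / 2 ^ d) ^ n := by
  have hsq : ((4 : ℝ) ^ (n + 1))⁻¹ = ((2 ^ (n + 1))⁻¹) ^ 2 := by
    rw [inv_pow, ← pow_mul, pow_mul']; norm_num
  rw [hsq, ← ofReal_measureReal, ← ENNReal.ofReal_pow (by positivity),
    ← ENNReal.ofReal_mul (by positivity), ← ENNReal.ofReal_mul (by positivity)]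
  refine ENNReal.ofReal_le_ofReal ?_
  calc (4 : ℝ) ^ (r * (n + 2)) * (torusMeasure d).real _
      ≤ 4 ^ (r * (n + 2)) * (3 * (2 ^ (n + 1))⁻¹ / 2) ^ d := by
        gcongr; exact measureReal_one_sub_Dhat_le_sq_le (by positivity)
    _ = 16 ^ r * (3 / 4) ^ d * (4 ^ r / 2 ^ d) ^ n := by
        rw [show (16 : ℝ) ^ r = 4 ^ (r * 2) by rw [pow_mul']; norm_num]
        field_simp
        ring_nf

theorem lintegral_tsum_indicator_le {r : ℕ} (hd : 2 * r < d) :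
    ∫⁻ k, ∑' n : ℕ, (Iic ((4 : ℝ) ^ (n + 1))⁻¹).indicator
        (fun _ => ENNReal.ofReal (4 ^ (r * (n + 2)))) (1 - Dhat d k) ∂torusMeasure d
      ≤ ENNReal.ofReal (6 * 16 ^ r / d) := by
  have hmeas : Measurable fun k => 1 - Dhat d k := by fun_prop
  rw [lintegral_tsum fun n => Measurable.aemeasurable ?_]
  swap
  · exact (measurable_const.indicator measurableSet_Iic).comp hmeas
  simp_rw [lintegral_indicator_const_comp hmeas measurableSet_Iic]
  set ρ := ENNReal.ofReal (4 ^ r / 2 ^ d)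
  have hρ : ρ ≤ 2⁻¹ := by
    rw [← ENNReal.ofReal_ofNat 2, ← ENNReal.ofReal_inv_of_pos two_pos]
    refine ENNReal.ofReal_le_ofReal ?_
    rw [div_le_iff₀ (by positivity), show (4 : ℝ) ^ r = 2⁻¹ * 2 ^ (2 * r + 1) by
      rw [pow_succ, pow_mul]; norm_num; ring]
    gcongr
    · norm_num
    · omega
  calc ∑' n : ℕ, ENNReal.ofReal (4 ^ (r * (n + 2)))
        * torusMeasure d ((fun k => 1 - Dhat d k) ⁻¹' Iic ((4 : ℝ) ^ (n + 1))⁻¹)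
      ≤ ∑' n : ℕ, ENNReal.ofReal (16 ^ r * (3 / 4) ^ d) * ρ ^ n :=
        ENNReal.tsum_le_tsum fun n => ofReal_mul_measure_one_sub_Dhat_le r n
    _ = ENNReal.ofReal (16 ^ r * (3 / 4) ^ d) * (1 - ρ)⁻¹ := by
        rw [ENNReal.tsum_mul_left, ENNReal.tsum_geometric]
    _ ≤ ENNReal.ofReal (16 ^ r * (3 / 4) ^ d) * 2 := by
        gcongr
        calc (1 - ρ)⁻¹ ≤ (1 - 2⁻¹)⁻¹ := by gcongr
          _ = 2 := by rw [ENNReal.one_sub_inv_two, inv_inv]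
    _ ≤ ENNReal.ofReal (6 * 16 ^ r / d) := by
        rw [← ENNReal.ofReal_ofNat 2, ← ENNReal.ofReal_mul (by positivity)]
        refine ENNReal.ofReal_le_ofReal ?_
        rw [le_div_iff₀ (Nat.cast_pos.mpr (by omega))]
        nlinarith [natCast_mul_three_quarters_pow_le d, pow_pos (by norm_num : (0 : ℝ) < 16) r]

theorem lintegral_inv_one_sub_Dhat_pow_le {r : ℕ} (hd : 2 * r < d) :
    ∫⁻ k, ENNReal.ofReal ((1 - Dhat d k)⁻¹ ^ r) ∂torusMeasure d
      ≤ ENNReal.ofReal (1 + 7 * 16 ^ r / d) := by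
  have hd₀ : (0 : ℝ) < d := Nat.cast_pos.mpr (by omega)
  calc ∫⁻ k, ENNReal.ofReal ((1 - Dhat d k)⁻¹ ^ r) ∂torusMeasure d
      ≤ ∫⁻ k, ENNReal.ofReal (1 + r * Dhat d k + 16 ^ r * Dhat d k ^ 2) + ∑' n : ℕ,
          (Iic ((4 : ℝ) ^ (n + 1))⁻¹).indicator (fun _ => ENNReal.ofReal (4 ^ (r * (n + 2))))
            (1 - Dhat d k) ∂torusMeasure d :=
        lintegral_mono fun k => ofReal_inv_one_sub_pow_le r
          (abs_le.mp (abs_Dhat_le_one d k)).1 (abs_le.mp (abs_Dhat_le_one d k)).2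
    _ ≤ ENNReal.ofReal (1 + 16 ^ r / (2 * d)) + ENNReal.ofReal (6 * 16 ^ r / d) := by
        rw [lintegral_add_left (by fun_prop), lintegral_ofReal_quadratic_Dhat]
        gcongr
        exact lintegral_tsum_indicator_le hd
    _ ≤ ENNReal.ofReal (1 + 7 * 16 ^ r / d) := by
        rw [← ENNReal.ofReal_add (by positivity) (by positivity)]
        refine ENNReal.ofReal_le_ofReal ?_
        field_simp
        nlinarith [pow_pos (by norm_num : (0 : ℝ) < 16) r]

end torusMeasure

theorem simple_random_walk_integral_general (r : ℕ) :
    ∃ K : ℝ, ∀ d : ℕ, 2 * r < d →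
      (∫⁻ k in Set.univ.pi (fun _ : Fin d => Set.Icc (-π) π),
          ENNReal.ofReal ((1 - Dhat d k)⁻¹ ^ r))
        ≤ ENNReal.ofReal ((2 * π) ^ d * (1 + K / d)) := by
  refine ⟨7 * 16 ^ r, fun d hd => ?_⟩
  rw [volume_restrict_pi_Icc_eq_smul_torusMeasure, lintegral_smul_measure, ENNReal.ofReal_mul (by positivity),
    smul_eq_mul]
  gcongr
  exact torusMeasure.lintegral_inv_one_sub_Dhat_pow_le hd

/-- For every positive integer `r` there is a constant `K`, independent of `d`, such
that for all dimensions `d > 2r` the normalized integral of `(1 − D̂(k))^{−r}` over the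
torus `[−π,π]^d` is finite and at most `1 + K/d`.  (The bound is stated for the
unnormalized lower Lebesgue integral against the bound `(2π)^d (1 + K/d)`; in
particular, since the right-hand side is finite, the integral is finite.) -/
theorem simple_random_walk_integral (r : ℕ) (hr : 0 < r) :
    ∃ K : ℝ, ∀ d : ℕ, 2 * r < d →
      (∫⁻ k in Set.univ.pi (fun _ : Fin d => Set.Icc (-π) π),
          ENNReal.ofReal ((1 - Dhat d k)⁻¹ ^ r))
        ≤ ENNReal.ofReal ((2 * π) ^ d * (1 + K / d)) :=
  simple_random_walk_integral_general r
end
end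

section
/- Last-exit characterization of loop erasure: let ω be a walk on ℤ^d. Define ℓ_0 = 0 and, inductively, ℓ_k = sup{ j : ω_j = ω_{ℓ_{k−1}} } + 1 for k ≥ 1 (with ℓ_k = −∞ once the supremum is over the empty set). Suppose there are exactly n+1 indices k with ℓ_k finite and ℓ_k ≤ |ω|, namely ℓ_0, ℓ_1, …, ℓ_n. Then the loop erasure of ω is LE(ω) = (ω_{ℓ_0}, ω_{ℓ_1}, …, ω_{ℓ_n}). -/
open scoped ENNReal NNReal BigOperators Classical

noncomputable section

namespace LWW

/-- A point of the lattice ℤ^d. -/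
abbrev Pt (d : ℕ) := Fin d → ℤ

/-- ℓ¹ distance on ℤ^d. -/
def dist1 {d : ℕ} (x y : Pt d) : ℕ := ∑ i, (x i - y i).natAbs

/-- Nearest-neighbour adjacency on ℤ^d. -/
def Adj {d : ℕ} (x y : Pt d) : Prop := dist1 x y = 1

/-- Auxiliary function for single loop erasure: scan the list, keeping the
self-avoiding prefix `pre`; when the first repeated vertex is met, return the
loop-erased list together with the removed loop. -/
def le1Aux {α : Type*} [DecidableEq α] : List α → List α → List α × Option (List α)
  | pre, [] => (pre, none)
  | pre, x :: rest =>
    if x ∈ pre then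
      (pre.takeWhile (fun y => y ≠ x) ++ x :: rest,
        some (pre.dropWhile (fun y => y ≠ x) ++ [x]))
    else le1Aux (pre ++ [x]) rest

/-- Single loop erasure LE¹. -/
def LE1 {α : Type*} [DecidableEq α] (l : List α) : List α := (le1Aux [] l).1

/-- The loop removed by a single loop erasure (if the list is not self-avoiding). -/
def removedLoop {α : Type*} [DecidableEq α] (l : List α) : Option (List α) := (le1Aux [] l).2

/-- Iterate single loop erasure (with fuel), collecting the multiset of removed loops. -/
def leAux {α : Type*} [DecidableEq α] : ℕ → List α → List α × Multiset (List α)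
  | 0, l => (l, 0)
  | n + 1, l =>
    match le1Aux ([] : List α) l with
    | (_, none) => (l, 0)
    | (l', some c) => ((leAux n l').1, c ::ₘ (leAux n l').2)

/-- Loop erasure LE. -/
def LE {α : Type*} [DecidableEq α] (l : List α) : List α := (leAux l.length l).1

/-- The multiset of loops removed by loop erasure. -/
def erasedLoops {α : Type*} [DecidableEq α] (l : List α) : Multiset (List α) :=
  (leAux l.length l).2

/-- The number of loops removed by loop erasure. -/
def nLoops {α : Type*} [DecidableEq α] (l : List α) : ℕ := Multiset.card (erasedLoops l)

/-- A (finite) nearest-neighbour walk on ℤ^d, recorded as its (nonempty) list of vertices. -/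
structure Walk (d : ℕ) where
  pts : List (Pt d)
  ne : pts ≠ []
  chain : pts.Chain' Adj

namespace Walk

variable {d : ℕ}

/-- The number of steps of a walk. -/
def len (ω : Walk d) : ℕ := ω.pts.length - 1

/-- The initial vertex of a walk. -/
def start (ω : Walk d) : Pt d := ω.pts.headI

/-- The final vertex of a walk. -/
def finish (ω : Walk d) : Pt d := ω.pts.getLastD default

/-- The range (set of visited vertices) of a walk. -/
def range (ω : Walk d) : Set (Pt d) := {x | x ∈ ω.pts}

/-- The `i`-th vertex of a walk. -/
def nth (ω : Walk d) (i : ℕ) : Pt d := ω.pts.getD i default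

/-- A walk is a loop if it has at least one step and ends where it began. -/
def IsLoop (ω : Walk d) : Prop := 1 ≤ ω.len ∧ ω.finish = ω.start

end Walk

/-- The list of vertices of a self-avoiding polygon: a closed nearest-neighbour
walk all of whose vertices are distinct except that the last equals the first. -/
def IsSAPList {d : ℕ} (l : List (Pt d)) : Prop :=
  l.Chain' Adj ∧ 3 ≤ l.length ∧ l.getLastD default = l.headI ∧ l.dropLast.Nodup

/-- Change the initial vertex of a polygon list by a cyclic rotation. -/
def polyRot {d : ℕ} (l : List (Pt d)) (r : ℕ) : List (Pt d) :=
  l.dropLast.rotate r ++ [(l.dropLast.rotate r).headI]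

/-- An isometry of the lattice ℤ^d: a bijection preserving ℓ¹ distance. -/
def IsLatticeIso {d : ℕ} (R : Pt d ≃ Pt d) : Prop :=
  ∀ x y : Pt d, dist1 (R x) (R y) = dist1 x y

/-- The symmetry assumption on the loop activities: invariance under isometries of ℤ^d
and under change of initial vertex and of orientation of the polygon. -/
def SymmAssumption {d : ℕ} (lam : List (Pt d) → ℝ≥0) : Prop :=
  (∀ R : Pt d ≃ Pt d, IsLatticeIso R → ∀ l : List (Pt d), IsSAPList l →
      lam (l.map R) = lam l) ∧
  (∀ l : List (Pt d), IsSAPList l → ∀ r : ℕ, lam (polyRot l r) = lam l) ∧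
  (∀ l : List (Pt d), IsSAPList l → lam l.reverse = lam l)

/-- The boundedness assumption: sup over self-avoiding polygons of the activity is finite. -/
def BoundedAssumption {d : ℕ} (lam : List (Pt d) → ℝ≥0) : Prop :=
  ∃ M : ℝ≥0, ∀ l : List (Pt d), IsSAPList l → lam l ≤ M

/-- The product of the loop activities over the loops erased from `ω`, i.e. λ^{n_L(ω)}. -/
def wt0 {d : ℕ} (lam : List (Pt d) → ℝ≥0) (ω : Walk d) : ℝ≥0∞ :=
  ((erasedLoops ω.pts).map (fun η => (lam η : ℝ≥0∞))).prod

/-- The λ-LWW weight w_{λ,z}(ω) = z^{|ω|} λ^{n_L(ω)}. -/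
def wt {d : ℕ} (lam : List (Pt d) → ℝ≥0) (z : ℝ≥0) (ω : Walk d) : ℝ≥0∞ :=
  (z : ℝ≥0∞) ^ ω.len * wt0 lam ω

/-- The λ-LWW two-point function. -/
def G {d : ℕ} (lam : List (Pt d) → ℝ≥0) (z : ℝ≥0) (x y : Pt d) : ℝ≥0∞ :=
  ∑' ω : Walk d, if ω.start = x ∧ ω.finish = y then wt lam z ω else 0

/-- The λ-LWW loop measure μ_{λ,z}(A;B). -/
def mu {d : ℕ} (lam : List (Pt d) → ℝ≥0) (z : ℝ≥0) (A B : Set (Pt d)) : ℝ≥0∞ :=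
  ∑' ω : Walk d,
    if ω.IsLoop ∧ (ω.range ∩ A).Nonempty ∧ ω.range ∩ B = ∅
    then wt lam z ω / (ω.len : ℝ≥0∞) else 0

/-- The generalized λ-LWW loop measure μ_{λ,z}(A,B;C) with two hitting sets. -/
def mu2 {d : ℕ} (lam : List (Pt d) → ℝ≥0) (z : ℝ≥0) (A B C : Set (Pt d)) : ℝ≥0∞ :=
  ∑' ω : Walk d,
    if ω.IsLoop ∧ (ω.range ∩ A).Nonempty ∧ (ω.range ∩ B).Nonempty ∧ ω.range ∩ C = ∅
    then wt lam z ω / (ω.len : ℝ≥0∞) else 0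

/-- exp : [0,∞] → [0,∞] with exp(∞) = ∞. -/
def eexp (x : ℝ≥0∞) : ℝ≥0∞ := if x = ⊤ then ⊤ else ENNReal.ofReal (Real.exp x.toReal)

/-- The loop-erased λ-LWW weight w̄_{λ,z}(η) of a self-avoiding walk η. -/
def wbar {d : ℕ} (lam : List (Pt d) → ℝ≥0) (z : ℝ≥0) (η : Walk d) : ℝ≥0∞ :=
  ∑' ω : Walk d, if LE ω.pts = η.pts then wt lam z ω else 0

/-- c_n^λ : the total λ-LWW mass of n-step walks started at the origin. -/
def cN {d : ℕ} (lam : List (Pt d) → ℝ≥0) (n : ℕ) : ℝ≥0∞ :=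
  ∑' ω : Walk d, if ω.start = 0 ∧ ω.len = n then wt0 lam ω else 0

/-- The susceptibility χ_λ(z) = Σ_n c_n^λ z^n. -/
def chi {d : ℕ} (lam : List (Pt d) → ℝ≥0) (z : ℝ) : ℝ≥0∞ :=
  ∑' n : ℕ, cN lam n * ENNReal.ofReal z ^ n

/-- The critical point z_c(λ): the radius of convergence of the susceptibility
(for a power series with nonnegative coefficients this is the supremum of the
set of nonnegative z at which the series converges). -/
def zc {d : ℕ} (lam : List (Pt d) → ℝ≥0) : ℝ :=
  sSup {z : ℝ | 0 ≤ z ∧ chi lam z < ⊤}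


/-- The last-exit times of a walk: `ℓ_0 = 0` and
`ℓ_k = sup{ j : ω_j = ω_{ℓ_{k−1}} } + 1`, with value `none` (i.e. `−∞`) once the
supremum is over the empty set (in particular once `ℓ_{k−1}` is not a valid index). -/
def lexit {d : ℕ} (ω : Walk d) : ℕ → Option ℕ
  | 0 => some 0
  | k + 1 =>
    match lexit ω k with
    | none => none
    | some m =>
      if hs : ((Finset.range (ω.len + 1)).filter
          (fun j => m ≤ ω.len ∧ ω.nth j = ω.nth m)).Nonempty
      then some (((Finset.range (ω.len + 1)).filter
          (fun j => m ≤ ω.len ∧ ω.nth j = ω.nth m)).max' hs + 1)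
      else none

/-!
Both sides are computed by last-exit erasure: keep the first vertex `x`, discard everything up
to and including the last visit to `x`, and recurse on the rest. This operation fixes
self-avoiding lists, and it does not see the first loop that chronological loop erasure removes:
that loop closes inside a self-avoiding prefix, so no vertex visited before the loop is visited
inside it. Hence `LE` equals last-exit erasure, and unfolding last-exit erasure along the walk
visits exactly the vertices `ω_{ℓ_0}, ω_{ℓ_1}, …`.
-/

section LastExitErasure

variable {α : Type*} [DecidableEq α]

/-- The part of `l` after the last occurrence of `x` (all of `l` if `x ∉ l`). -/
def afterLast (x : α) (l : List α) : List α := (l.reverse.takeWhile (fun y => y ≠ x)).reverse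

lemma length_afterLast_le (x : α) (l : List α) : (afterLast x l).length ≤ l.length := by
  simpa [afterLast] using
    (List.takeWhile_sublist (l := l.reverse) (fun y => decide (y ≠ x))).length_le

lemma afterLast_of_not_mem {x : α} {l : List α} (h : x ∉ l) : afterLast x l = l := by
  have : l.reverse.takeWhile (fun y => decide (y ≠ x)) = l.reverse := by
    rw [List.takeWhile_eq_self_iff]
    intro y hy
    simpa using ne_of_mem_of_not_mem (List.mem_reverse.mp hy) h
  rw [afterLast, this, List.reverse_reverse]

omit [DecidableEq α] in
lemma _root_.List.takeWhile_append_of_exists_not {p : α → Bool} {l : List α}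
    (h : ∃ a ∈ l, ¬ p a) (r : List α) : (l ++ r).takeWhile p = l.takeWhile p := by
  obtain ⟨a, ha, hpa⟩ := h
  rw [List.takeWhile_append, if_neg]
  intro hlen
  exact hpa (List.takeWhile_eq_self_iff.mp (List.takeWhile_sublist p |>.eq_of_length hlen) a ha)

lemma afterLast_append_of_mem {x : α} {r : List α} (h : x ∈ r) (l : List α) :
    afterLast x (l ++ r) = afterLast x r := by
  rw [afterLast, afterLast, List.reverse_append,
    List.takeWhile_append_of_exists_not ⟨x, List.mem_reverse.mpr h, by simp⟩]

lemma afterLast_cons_self (x : α) (l : List α) : afterLast x (x :: l) = afterLast x l := by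
  by_cases hx : x ∈ l
  · exact afterLast_append_of_mem hx [x]
  · have hne : ∀ y ∈ l.reverse, decide (y ≠ x) := fun y hy => by
      simpa using ne_of_mem_of_not_mem (List.mem_reverse.mp hy) hx
    rw [afterLast_of_not_mem hx, afterLast, List.reverse_cons, List.takeWhile_append_of_pos hne]
    simp

lemma afterLast_drop_eq_drop {x : α} {l : List α} {i j : ℕ} (hij : i ≤ j + 1)
    (hj : j < l.length) (hx : l[j] = x) (hlast : x ∉ l.drop (j + 1)) :
    afterLast x (l.drop i) = l.drop (j + 1) := by
  obtain rfl | hij := eq_or_lt_of_le hij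
  · exact afterLast_of_not_mem hlast
  · have hsplit : l.drop i = (l.drop i).take (j - i) ++ x :: l.drop (j + 1) := by
      conv_lhs => rw [← List.take_append_drop (j - i) (l.drop i)]
      rw [List.drop_drop, Nat.add_sub_cancel' (by omega), List.drop_eq_getElem_cons hj, hx]
    rw [hsplit, afterLast_append_of_mem List.mem_cons_self, afterLast_cons_self,
      afterLast_of_not_mem hlast]

def lastExitErasure : List α → List α
  | [] => []
  | x :: t => x :: lastExitErasure (afterLast x t)
  termination_by l => l.length
  decreasing_by exact Nat.lt_succ_of_le (length_afterLast_le x t)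

lemma lastExitErasure_nil : lastExitErasure ([] : List α) = [] := by
  rw [lastExitErasure]

lemma lastExitErasure_cons (x : α) (t : List α) :
    lastExitErasure (x :: t) = x :: lastExitErasure (afterLast x t) := by
  rw [lastExitErasure]

lemma lastExitErasure_of_nodup : ∀ {l : List α}, l.Nodup → lastExitErasure l = l
  | [], _ => lastExitErasure_nil
  | x :: t, h => by
    rw [List.nodup_cons] at h
    rw [lastExitErasure_cons, afterLast_of_not_mem h.1, lastExitErasure_of_nodup h.2]

lemma lastExitErasure_eraseLoop : ∀ (P : List α) (x : α) (Q R : List α), (P ++ x :: Q).Nodup →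
    lastExitErasure (P ++ x :: (Q ++ x :: R)) = lastExitErasure (P ++ x :: R)
  | [], x, Q, R, _ => by
    rw [List.nil_append, List.nil_append, lastExitErasure_cons, lastExitErasure_cons,
      afterLast_append_of_mem List.mem_cons_self Q, afterLast_cons_self]
  | y :: P, x, Q, R, h => by
    rw [List.cons_append, List.nodup_cons] at h
    simp only [List.cons_append, lastExitErasure_cons]
    by_cases hyR : y ∈ R
    · rw [show P ++ x :: (Q ++ x :: R) = (P ++ x :: Q ++ [x]) ++ R by simp,
        show P ++ x :: R = (P ++ [x]) ++ R by simp,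
        afterLast_append_of_mem hyR, afterLast_append_of_mem hyR]
    · have hy : y ∉ P ∧ y ≠ x ∧ y ∉ Q := by simpa [not_or] using h.1
      rw [afterLast_of_not_mem (by simp [hy, hyR]), afterLast_of_not_mem (by simp [hy, hyR]),
        lastExitErasure_eraseLoop P x Q R h.2]

omit [DecidableEq α] in
lemma _root_.List.exists_dropWhile_eq_cons_of_not {p : α → Bool} {l : List α}
    (h : ∃ a ∈ l, ¬ p a) :
    ∃ a Q, ¬ p a ∧ l.dropWhile p = a :: Q := by
  obtain ⟨a, Q, hQ⟩ := List.exists_cons_of_ne_nil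
    (mt List.dropWhile_eq_nil_iff.mp (by simpa using h))
  refine ⟨a, Q, ?_, hQ⟩
  simpa [hQ] using List.head_dropWhile_not p (l := l) (by simp [hQ])

lemma le1Aux_cases : ∀ (l pre : List α), pre.Nodup →
    (le1Aux pre l = (pre ++ l, none) ∧ (pre ++ l).Nodup) ∨
    (∃ P x Q R c, pre ++ l = P ++ x :: (Q ++ x :: R) ∧ (P ++ x :: Q).Nodup ∧
      le1Aux pre l = (P ++ x :: R, some c))
  | [], pre, h => Or.inl ⟨by rw [le1Aux, List.append_nil], by simpa using h⟩
  | x :: rest, pre, h => by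
    by_cases hx : x ∈ pre
    · obtain ⟨x', Q, hx', hQ⟩ :=
        List.exists_dropWhile_eq_cons_of_not (p := fun y => y ≠ x) ⟨x, hx, by simp⟩
      rw [show x' = x by simpa using hx'] at hQ
      have hpre : pre = pre.takeWhile (fun y => y ≠ x) ++ x :: Q := by
        rw [← hQ, List.takeWhile_append_dropWhile]
      right
      refine ⟨_, x, Q, rest, _, ?_, hpre ▸ h, by rw [le1Aux, if_pos hx, hQ]⟩
      conv_lhs => rw [hpre]
      simp
    · have h' : (pre ++ [x]).Nodup := List.nodup_append.mpr
        ⟨h, List.nodup_singleton x, by simpa using fun a ha (hax : a = x) => hx (hax ▸ ha)⟩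
      rw [le1Aux, if_neg hx]
      simpa using le1Aux_cases rest (pre ++ [x]) h'

lemma nodup_and_lastExitErasure_leAux_fst : ∀ (fuel : ℕ) (l : List α), l.length ≤ fuel →
    (leAux fuel l).1.Nodup ∧ lastExitErasure (leAux fuel l).1 = lastExitErasure l
  | 0, l, h => by
    obtain rfl : l = [] := List.length_eq_zero_iff.mp (Nat.le_zero.mp h)
    exact ⟨List.nodup_nil, rfl⟩
  | fuel + 1, l, h => by
    rcases le1Aux_cases l [] List.nodup_nil with
      ⟨hle1, hnodup⟩ | ⟨P, x, Q, R, c, hl, hnodup, hle1⟩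
    · rw [List.nil_append] at hle1 hnodup
      simpa only [leAux, hle1, and_true] using hnodup
    · rw [List.nil_append] at hl
      have hlen : (P ++ x :: R).length ≤ fuel := by
        rw [hl] at h
        simp only [List.length_append, List.length_cons] at h ⊢
        omega
      simp only [leAux, hle1]
      rw [hl, lastExitErasure_eraseLoop P x Q R hnodup]
      exact nodup_and_lastExitErasure_leAux_fst fuel (P ++ x :: R) hlen

theorem LE_eq_lastExitErasure (l : List α) : LE l = lastExitErasure l := by
  obtain ⟨hnodup, heq⟩ := nodup_and_lastExitErasure_leAux_fst l.length l le_rfl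
  rw [LE, ← lastExitErasure_of_nodup hnodup, heq]

end LastExitErasure

namespace Walk

variable {d : ℕ}

lemma length_pts (ω : Walk d) : ω.pts.length = ω.len + 1 := by
  have := List.length_pos_iff.mpr ω.ne
  rw [len]
  omega

lemma nth_eq_getElem (ω : Walk d) {i : ℕ} (hi : i < ω.pts.length) : ω.nth i = ω.pts[i] :=
  List.getD_eq_getElem _ _ hi

end Walk

section LastExitTimes

variable {d : ℕ}

lemma exists_lexit_succ_eq_last_visit_add_one (ω : Walk d) {k m : ℕ} (hk : lexit ω k = some m)
    (hm : m ≤ ω.len) :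
    ∃ j, lexit ω (k + 1) = some (j + 1) ∧ m ≤ j ∧ j ≤ ω.len ∧ ω.nth j = ω.nth m ∧
      ω.nth m ∉ ω.pts.drop (j + 1) := by
  set visits := (Finset.range (ω.len + 1)).filter (fun j => m ≤ ω.len ∧ ω.nth j = ω.nth m)
  have mem_visits : ∀ j, j ∈ visits ↔ j ≤ ω.len ∧ ω.nth j = ω.nth m := by
    simp [visits, hm]
  have hm_mem : m ∈ visits := (mem_visits m).mpr ⟨hm, rfl⟩
  have hne : visits.Nonempty := ⟨m, hm_mem⟩
  have hj_mem := (mem_visits _).mp (visits.max'_mem hne)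
  refine ⟨visits.max' hne, by simp only [lexit, hk]; exact dif_pos hne,
    visits.le_max' m hm_mem, hj_mem.1, hj_mem.2, ?_⟩
  intro hmem
  obtain ⟨i, hi, hval⟩ := List.mem_iff_getElem.mp hmem
  rw [List.getElem_drop] at hval
  rw [List.length_drop] at hi
  have hlate : visits.max' hne + 1 + i ∈ visits := by
    rw [ω.length_pts] at hi
    refine (mem_visits _).mpr ⟨by omega, ?_⟩
    rw [ω.nth_eq_getElem (by rw [ω.length_pts]; omega), hval]
  have := visits.le_max' _ hlate
  omega

lemma lastExitErasure_drop_lexit_eq_cons (ω : Walk d) {k m : ℕ} (hk : lexit ω k = some m)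
    (hm : m ≤ ω.len) : ∃ m', lexit ω (k + 1) = some m' ∧
      lastExitErasure (ω.pts.drop m) = ω.nth m :: lastExitErasure (ω.pts.drop m') := by
  obtain ⟨j, hj, hmj, hjlen, hjm, hlast⟩ := exists_lexit_succ_eq_last_visit_add_one ω hk hm
  have hlen := ω.length_pts
  refine ⟨j + 1, hj, ?_⟩
  rw [List.drop_eq_getElem_cons (by omega), lastExitErasure_cons, ← ω.nth_eq_getElem,
    afterLast_drop_eq_drop (by omega) (by omega) (by rw [← ω.nth_eq_getElem, hjm]) hlast]

lemma lastExitErasure_drop_lexit_eq_map (ω : Walk d) (n : ℕ)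
    (h₁ : ∀ k ≤ n, ∃ m : ℕ, lexit ω k = some m ∧ m ≤ ω.len)
    (h₂ : ∀ k m : ℕ, lexit ω k = some m → m ≤ ω.len → k ≤ n)
    (i k m : ℕ) (hkn : k + i = n) (hk : lexit ω k = some m) (hm : m ≤ ω.len) :
    lastExitErasure (ω.pts.drop m) =
      (List.range' k (i + 1)).map (fun j => ω.nth ((lexit ω j).getD 0)) := by
  induction i generalizing k m with
  | zero =>
    obtain ⟨m', hm', hstep⟩ := lastExitErasure_drop_lexit_eq_cons ω hk hm
    have hm'_large : ω.len < m' := lt_of_not_ge fun hle => by have := h₂ _ _ hm' hle; omega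
    rw [hstep, List.drop_eq_nil_of_le (by rw [ω.length_pts]; omega), lastExitErasure_nil]
    simp [hk]
  | succ i ih =>
    obtain ⟨m', hm', hstep⟩ := lastExitErasure_drop_lexit_eq_cons ω hk hm
    obtain ⟨m'', hm'', hm''_le⟩ := h₁ (k + 1) (by omega)
    obtain rfl : m' = m'' := Option.some.inj (hm'.symm.trans hm'')
    rw [hstep, ih (k + 1) m' (by omega) hm' hm''_le, List.range'_succ (s := k) (n := i + 1)]
    simp [hk]

end LastExitTimes

/-- **Last-exit characterization of loop erasure.**  Let `ω` be a walk on ℤ^d and let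
`ℓ_k` be its last-exit times.  If there are exactly `n+1` indices `k` with `ℓ_k`
finite and `ℓ_k ≤ |ω|` (namely `k = 0, 1, …, n`), then
`LE(ω) = (ω_{ℓ_0}, ω_{ℓ_1}, …, ω_{ℓ_n})`. -/
theorem loop_erasure_last_exit {d : ℕ} (ω : Walk d) (n : ℕ)
    (h₁ : ∀ k ≤ n, ∃ m : ℕ, lexit ω k = some m ∧ m ≤ ω.len)
    (h₂ : ∀ k m : ℕ, lexit ω k = some m → m ≤ ω.len → k ≤ n) :
    LE ω.pts = (List.range (n + 1)).map (fun k => ω.nth ((lexit ω k).getD 0)) := by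
  have h := lastExitErasure_drop_lexit_eq_map ω n h₁ h₂ n 0 0 (zero_add n) rfl (Nat.zero_le _)
  rw [List.drop_zero] at h
  rw [LE_eq_lastExitErasure, h, List.range_eq_range']

end LWW
end
end
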